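/- arXiv:1509.05815 — 2 statements merged into one kernel-verified Lean document; each statement's English description precedes it below -/
import Mathlib

section
/- Fix positive integer weights (m_1, …, m_M) with m_1 + ⋯ + m_M = N − 1. The weighted transportation polytope T equals the Minkowski sum Σ_{j=1}^{N} φ_j(D). -/
/-!
Repeating row `i` of `Y ∈ T` `m_i` times gives an `(N-1) × N` matrix with row sums `N` and
column sums `N - 1`. Appending a row of ones and dividing by `N` yields a doubly stochastic
matrix, which by Birkhoff's theorem is a convex combination of permutation matrices `P_σ`. The
permutations with `σ(N) = j` carry total weight `1/N`, and for each of them the first `N - 1`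
rows of `P_σ` are `φ_j` of an `(N-1) × (N-1)` permutation matrix. Hence the expanded matrix lies
in `Σ_j φ_j(Birkhoff polytope)`, and averaging the repeated rows back maps the Birkhoff polytope
into `D` and commutes with every `φ_j`.
-/

open Pointwise

/-- The polytope of weighted doubly stochastic tw-matrices (M × K matrices, K = N - 1). -/
def stochPolytope {M K : ℕ} (m : Fin M → ℕ) : Set (Fin M → Fin K → ℝ) :=
  {Y | (∀ i j, 0 ≤ Y i j) ∧ (∀ i, ∑ j, Y i j = 1) ∧ ∀ j, ∑ i, (m i : ℝ) * Y i j = 1}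

/-- The weighted transportation polytope (M × N matrices, N = K + 1): row sums `N` and
weighted column sums `N - 1`. -/
def transPolytope {M K : ℕ} (m : Fin M → ℕ) : Set (Fin M → Fin (K + 1) → ℝ) :=
  {Y | (∀ i j, 0 ≤ Y i j) ∧ (∀ i, ∑ j, Y i j = ((K : ℝ) + 1)) ∧
    ∀ j, ∑ i, (m i : ℝ) * Y i j = (K : ℝ)}

/-- The embedding `φ_j` of `M × K` matrices into `M × (K+1)` matrices given by inserting a
zero column in position `j`. -/
def insertZeroCol {M K : ℕ} (j : Fin (K + 1)) (Y : Fin M → Fin K → ℝ) :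
    Fin M → Fin (K + 1) → ℝ :=
  fun i => Fin.insertNth j (0 : ℝ) (Y i)

open Finset

theorem Set.mem_fintype_sum_image {ι α β : Type*} [Fintype ι] [AddCommMonoid β]
    (f : ι → α → β) (S : ι → Set α) (b : β) :
    b ∈ ∑ i, f i '' S i ↔ ∃ a : ι → α, (∀ i, a i ∈ S i) ∧ ∑ i, f i (a i) = b := by
  rw [Set.mem_fintype_sum]
  constructor
  · rintro ⟨g, hg, rfl⟩
    choose a ha hfa using hg
    exact ⟨a, ha, by simp only [hfa]⟩
  · rintro ⟨a, ha, rfl⟩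
    exact ⟨_, fun i => ⟨a i, ha i, rfl⟩, rfl⟩

section InsertZeroCol

variable {M K : ℕ}

@[simp] lemma insertZeroCol_apply_same (j : Fin (K + 1)) (Y : Fin M → Fin K → ℝ) (i : Fin M) :
    insertZeroCol j Y i j = 0 :=
  Fin.insertNth_apply_same (α := fun _ => ℝ) j 0 (Y i)

@[simp] lemma insertZeroCol_apply_succAbove (j : Fin (K + 1)) (Y : Fin M → Fin K → ℝ)
    (i : Fin M) (c : Fin K) : insertZeroCol j Y i (j.succAbove c) = Y i c :=
  Fin.insertNth_apply_succAbove (α := fun _ => ℝ) j 0 (Y i) c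

def insertZeroColLinearMap (j : Fin (K + 1)) :
    (Fin M → Fin K → ℝ) →ₗ[ℝ] (Fin M → Fin (K + 1) → ℝ) where
  toFun := insertZeroCol j
  map_add' X Y := by
    funext i c
    induction c using Fin.succAboveCases j <;> simp
  map_smul' a X := by
    funext i c
    induction c using Fin.succAboveCases j <;> simp

lemma insertZeroCol_sum {ι : Type*} (j : Fin (K + 1)) (s : Finset ι)
    (X : ι → Fin M → Fin K → ℝ) :
    insertZeroCol j (∑ k ∈ s, X k) = ∑ k ∈ s, insertZeroCol j (X k) :=
  map_sum (insertZeroColLinearMap j) X s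

lemma insertZeroCol_smul (j : Fin (K + 1)) (a : ℝ) (X : Fin M → Fin K → ℝ) :
    insertZeroCol j (a • X) = a • insertZeroCol j X :=
  (insertZeroColLinearMap j).map_smul a X

lemma sum_insertZeroCol_row (j : Fin (K + 1)) (Y : Fin M → Fin K → ℝ) (i : Fin M) :
    ∑ c, insertZeroCol j Y i c = ∑ c, Y i c := by
  simp [Fin.sum_univ_succAbove _ j]

lemma sum_mul_insertZeroCol_col {m : Fin M → ℕ} {A : Fin M → Fin K → ℝ}
    (hA : A ∈ stochPolytope m) (j c : Fin (K + 1)) :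
    ∑ i, (m i : ℝ) * insertZeroCol j A i c = if c = j then 0 else 1 := by
  induction c using Fin.succAboveCases j with
  | x => simp
  | p c => simpa [Fin.succAbove_ne] using hA.2.2 c

end InsertZeroCol

theorem sum_image_insertZeroCol_subset_transPolytope {M K : ℕ} (m : Fin M → ℕ) :
    ∑ j : Fin (K + 1), insertZeroCol j '' stochPolytope m ⊆ transPolytope m := by
  intro Y hY
  obtain ⟨A, hA, rfl⟩ := (Set.mem_fintype_sum_image _ _ _).1 hY
  refine ⟨fun i c => ?_, fun i => ?_, fun c => ?_⟩
  · simp only [Finset.sum_apply]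
    refine sum_nonneg fun j _ => ?_
    induction c using Fin.succAboveCases j <;> simp [(hA j).1]
  · simp only [Finset.sum_apply]
    rw [sum_comm]
    simp [sum_insertZeroCol_row, (hA _).2.1]
  · simp only [Finset.sum_apply, mul_sum]
    rw [sum_comm]
    simp [sum_mul_insertZeroCol_col (hA _), sum_ite, filter_ne, card_erase_of_mem]

theorem convex_stochPolytope {M K : ℕ} (m : Fin M → ℕ) :
    Convex ℝ (stochPolytope (K := K) m) := by
  rintro X ⟨hX0, hXr, hXc⟩ Y ⟨hY0, hYr, hYc⟩ a b ha hb hab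
  refine ⟨fun i j => ?_, fun i => ?_, fun j => ?_⟩
  · simp only [Pi.add_apply, Pi.smul_apply, smul_eq_mul]
    have := hX0 i j; have := hY0 i j; positivity
  · simp [sum_add_distrib, ← mul_sum, hXr, hYr, hab]
  · simp [mul_add, mul_left_comm _ a, mul_left_comm _ b, sum_add_distrib, ← mul_sum, hXc, hYc, hab]

section PermMinor

variable {K : ℕ}

lemma permMatrix_apply {n : Type*} [DecidableEq n] (σ : Equiv.Perm n) (r c : n) :
    σ.permMatrix ℝ r c = if σ r = c then 1 else 0 := by
  simp [PEquiv.toMatrix_apply, Equiv.toPEquiv_apply]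

/-- The permutation matrix of `σ` with its last row and the column `σ (Fin.last K)` deleted. -/
def permMinor (σ : Equiv.Perm (Fin (K + 1))) : Fin K → Fin K → ℝ :=
  fun r c => if σ r.castSucc = (σ (Fin.last K)).succAbove c then 1 else 0

lemma permMatrix_castSucc_eq_insertZeroCol (σ : Equiv.Perm (Fin (K + 1))) (r : Fin K)
    (c : Fin (K + 1)) :
    σ.permMatrix ℝ r.castSucc c = insertZeroCol (σ (Fin.last K)) (permMinor σ) r c := by
  induction c using Fin.succAboveCases (σ (Fin.last K)) with
  | x => simp [(Fin.castSucc_lt_last r).ne]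
  | p c => simp [permMinor]

lemma permMinor_mem_stochPolytope (σ : Equiv.Perm (Fin (K + 1))) :
    permMinor σ ∈ stochPolytope (fun _ => 1) := by
  have hP := permMatrix_mem_doublyStochastic (R := ℝ) (σ := σ)
  refine ⟨fun r c => ?_, fun r => ?_, fun c => ?_⟩
  · unfold permMinor; split <;> norm_num
  · have hrow := sum_row_of_mem_doublyStochastic hP r.castSucc
    rw [Fin.sum_univ_succAbove _ (σ (Fin.last K))] at hrow
    simpa [permMinor, permMatrix_apply, (Fin.castSucc_lt_last r).ne] using hrow
  · have hcol := sum_col_of_mem_doublyStochastic hP ((σ (Fin.last K)).succAbove c)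
    rw [Fin.sum_univ_castSucc] at hcol
    simpa [permMinor, permMatrix_apply, (Fin.succAbove_ne _ c).symm] using hcol

end PermMinor

lemma inv_smul_snoc_one_mem_doublyStochastic {K : ℕ} {X : Fin K → Fin (K + 1) → ℝ}
    (hX : X ∈ transPolytope (fun _ => 1)) :
    ((K : ℝ) + 1)⁻¹ • Matrix.of (Fin.snoc X 1) ∈ doublyStochastic ℝ (Fin (K + 1)) := by
  obtain ⟨hX0, hXr, hXc⟩ := hX
  have hK : (K : ℝ) + 1 ≠ 0 := by positivity
  rw [mem_doublyStochastic_iff_sum]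
  refine ⟨fun r c => ?_, fun r => ?_, fun c => ?_⟩
  · induction r using Fin.lastCases with
    | last => simp; positivity
    | cast r => simp; have := hX0 r c; positivity
  · induction r using Fin.lastCases with
    | last => simp [hK]
    | cast r => simp [← mul_sum, hXr r, hK]
  · have hc : ∑ r, X r c = K := by simpa using hXc c
    simp [Fin.sum_univ_castSucc, ← mul_sum, hc, hK]

theorem transPolytope_one_subset_sum_image_insertZeroCol (K : ℕ) :
    transPolytope (M := K) (K := K) (fun _ => 1) ⊆
      ∑ j : Fin (K + 1), insertZeroCol j '' stochPolytope (fun _ => 1) := by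
  intro X hX
  obtain ⟨w, hw0, -, hwZ⟩ :=
    exists_eq_sum_perm_of_mem_doublyStochastic (inv_smul_snoc_one_mem_doublyStochastic hX)
  have hentry : ∀ r c, ((K : ℝ) + 1)⁻¹ * Fin.snoc (α := fun _ => Fin (K + 1) → ℝ) X 1 r c =
      ∑ σ, w σ * σ.permMatrix ℝ r c := fun r c => by
    simpa [Matrix.sum_apply] using (congrFun₂ hwZ r c).symm
  have hfiber : ∀ j, ∑ σ with σ (Fin.last K) = j, w σ = ((K : ℝ) + 1)⁻¹ := fun j => by
    simpa [permMatrix_apply, sum_filter] using (hentry (Fin.last K) j).symm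
  set B : Fin (K + 1) → Fin K → Fin K → ℝ :=
    fun j => ∑ σ with σ (Fin.last K) = j, (((K : ℝ) + 1) * w σ) • permMinor σ
  have hB : ∀ j, B j ∈ stochPolytope (fun _ => 1) := fun j =>
    (convex_stochPolytope _).sum_mem (fun σ _ => by have := hw0 σ; positivity)
      (by rw [← mul_sum, hfiber]; field_simp)
      (fun σ _ => permMinor_mem_stochPolytope σ)
  refine (Set.mem_fintype_sum_image _ _ _).2 ⟨B, hB, ?_⟩
  calc ∑ j, insertZeroCol j (B j)
      = ∑ j, ∑ σ with σ (Fin.last K) = j,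
          (((K : ℝ) + 1) * w σ) • insertZeroCol (σ (Fin.last K)) (permMinor σ) := by
        refine sum_congr rfl fun j _ => ?_
        rw [insertZeroCol_sum]
        refine sum_congr rfl fun σ hσ => ?_
        rw [insertZeroCol_smul, (mem_filter.1 hσ).2]
    _ = ∑ σ, (((K : ℝ) + 1) * w σ) • insertZeroCol (σ (Fin.last K)) (permMinor σ) :=
        sum_fiberwise _ _ _
    _ = X := by
        funext r c
        simp only [Finset.sum_apply, Pi.smul_apply, smul_eq_mul,
          ← permMatrix_castSucc_eq_insertZeroCol, mul_assoc, ← mul_sum, ← hentry, Fin.snoc_castSucc]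
        field_simp

section RowExpansion

variable {M K L : ℕ} {m : Fin M → ℕ} (e : (Σ i, Fin (m i)) ≃ Fin K)

/-- Row `i` of `Y`, repeated `m i` times. -/
def expandRows (Y : Fin M → Fin L → ℝ) : Fin K → Fin L → ℝ :=
  fun r => Y (e.symm r).1

noncomputable def compressRows (X : Fin K → Fin L → ℝ) : Fin M → Fin L → ℝ :=
  fun i c => (m i : ℝ)⁻¹ * ∑ s, X (e ⟨i, s⟩) c

lemma sum_eq_sum_sum_of_sigmaEquiv (f : Fin K → ℝ) : ∑ r, f r = ∑ i, ∑ s, f (e ⟨i, s⟩) := by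
  rw [← e.sum_comp, Fintype.sum_sigma]

lemma expandRows_mem_transPolytope {Y : Fin M → Fin (L + 1) → ℝ} (hY : Y ∈ transPolytope m) :
    expandRows e Y ∈ transPolytope (fun _ => 1) := by
  obtain ⟨hY0, hYr, hYc⟩ := hY
  refine ⟨fun r c => hY0 _ c, fun r => hYr _, fun c => ?_⟩
  simp [expandRows, sum_eq_sum_sum_of_sigmaEquiv e, hYc]

variable {e}

lemma compressRows_mem_stochPolytope (hm : ∀ i, m i ≠ 0) {X : Fin K → Fin L → ℝ}
    (hX : X ∈ stochPolytope (fun _ => 1)) : compressRows e X ∈ stochPolytope m := by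
  obtain ⟨hX0, hXr, hXc⟩ := hX
  refine ⟨fun i c => ?_, fun i => ?_, fun c => ?_⟩
  · exact mul_nonneg (by positivity) (sum_nonneg fun s _ => hX0 _ c)
  · simp [compressRows, ← mul_sum, sum_comm (γ := Fin L), hXr, hm i]
  · have hc := hXc c
    simp only [Nat.cast_one, one_mul, sum_eq_sum_sum_of_sigmaEquiv e] at hc
    simp [compressRows, hm, hc]

lemma compressRows_expandRows (hm : ∀ i, m i ≠ 0) (Y : Fin M → Fin L → ℝ) :
    compressRows e (expandRows e Y) = Y := by
  funext i c
  simp [compressRows, expandRows, hm i]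

lemma compressRows_sum {ι : Type*} (s : Finset ι) (X : ι → Fin K → Fin L → ℝ) :
    compressRows e (∑ k ∈ s, X k) = ∑ k ∈ s, compressRows e (X k) := by
  funext i c
  simp only [compressRows, Finset.sum_apply, mul_sum]
  exact sum_comm

lemma compressRows_insertZeroCol (j : Fin (L + 1)) (X : Fin K → Fin L → ℝ) :
    compressRows e (insertZeroCol j X) = insertZeroCol j (compressRows e X) := by
  funext i c
  induction c using Fin.succAboveCases j <;> simp [compressRows]

end RowExpansion

/-- The weighted transportation polytope is the Minkowski sum `Σ_{j=1}^{N} φ_j(D)`. -/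
theorem transPolytope_eq_minkowski_sum {M K : ℕ} (m : Fin M → ℕ)
    (hm : ∀ i, 1 ≤ m i) (hw : ∑ i, m i = K) :
    transPolytope (M := M) (K := K) m =
      ∑ j : Fin (K + 1), (insertZeroCol j '' stochPolytope m) := by
  refine subset_antisymm (fun Y hY => ?_) (sum_image_insertZeroCol_subset_transPolytope m)
  have hm₀ : ∀ i, m i ≠ 0 := fun i => Nat.one_le_iff_ne_zero.mp (hm i)
  obtain ⟨e⟩ : Nonempty ((Σ i, Fin (m i)) ≃ Fin K) := Fintype.card_eq.mp (by simp [hw])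
  obtain ⟨B, hB, hBY⟩ := (Set.mem_fintype_sum_image _ _ _).1 <|
    transPolytope_one_subset_sum_image_insertZeroCol K (expandRows_mem_transPolytope e hY)
  refine (Set.mem_fintype_sum_image _ _ _).2
    ⟨fun j => compressRows e (B j), fun j => compressRows_mem_stochPolytope hm₀ (hB j), ?_⟩
  rw [← compressRows_expandRows hm₀ Y, ← hBY, compressRows_sum]
  simp only [compressRows_insertZeroCol]
end

section
/- Fix positive integer weights (m_1, …, m_M) with m_1 + ⋯ + m_M = N − 1. Taking the support hypergraph gives a bijection between the vertices (extreme points) of the weighted transportation polytope T and the connected linkage hypergraphs on vertex set {1, …, N} with edges indexed by {1, …, M} where edge i has exactly m_i + 1 vertices. Moreover, every vertex of T lies in the Minkowski sum Σ_{j=1}^{N} φ_j(D). -/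
/-!
A point of `T` is a vertex iff its support carries no nonzero matrix with zero margins, so a
vertex is determined by its support and, by a dimension count, has at most `M + N - 1` nonzero
entries; as every row needs `m i + 1` of them, the support is a linkage hypergraph, and a
divisibility argument shows that it is connected. The incidence graph of a connected linkage
hypergraph `H` has `N + M` vertices and `N + M - 1` edges, so it is a tree. Hence, for each column
`r`, putting weight `1 / m i` on the vertices of `H i` that deleting edge `i` cuts off from `r`
gives a matrix in `φ_r(D)`. The sum of these matrices over `r` lies in `T`, has support `H`, and
the tree structure makes that support rigid, so it is the vertex with support `H`.
-/

open Pointwise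

/-- The support hypergraph of a nonnegative matrix: edge `i` is the set of columns where
row `i` is positive. -/
def suppHyp {M N : ℕ} (Y : Fin M → Fin N → ℝ) : Fin M → Set (Fin N) :=
  fun i => {j | 0 < Y i j}

/-- A hypergraph (with edges given by vertex sets) is connected. -/
def SConnected {V E : Type*} (H : E → Set V) : Prop :=
  ∀ u v : V, Relation.ReflTransGen (fun p q => ∃ e, p ∈ H e ∧ q ∈ H e) u v

open Function Finset

section Hypergraph

variable {V ι : Type*} {H H' : ι → Set V} {i e : ι} {p q r v w : V}

def HReachable (H : ι → Set V) : V → V → Prop :=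
  Relation.ReflTransGen fun p q => ∃ e, p ∈ H e ∧ q ∈ H e

namespace HReachable

protected theorem refl : HReachable H p p :=
  Relation.ReflTransGen.refl

theorem step (hp : p ∈ H e) (hq : q ∈ H e) : HReachable H p q :=
  .single ⟨e, hp, hq⟩

theorem trans (h₁ : HReachable H p q) (h₂ : HReachable H q r) : HReachable H p r :=
  Relation.ReflTransGen.trans h₁ h₂

theorem symm (h : HReachable H p q) : HReachable H q p := by
  induction h with
  | refl => exact .refl
  | tail _ hstep ih =>
    obtain ⟨e, hp, hq⟩ := hstep
    exact .head ⟨e, hq, hp⟩ ih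

theorem mono (hHH' : ∀ e, H e ⊆ H' e) (h : HReachable H p q) : HReachable H' p q :=
  Relation.ReflTransGen.mono (fun _ _ ⟨e, hp, hq⟩ => ⟨e, hHH' e hp, hHH' e hq⟩) _ _ h

end HReachable

theorem SConnected.hReachable (hconn : SConnected H) (p q : V) : HReachable H p q :=
  hconn p q

def incidenceGraph (H : ι → Set V) : SimpleGraph (V ⊕ ι) where
  Adj
    | .inl v, .inr i => v ∈ H i
    | .inr i, .inl v => v ∈ H i
    | _, _ => False
  symm := ⟨by rintro (_ | _) (_ | _) h <;> exact h⟩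
  loopless := ⟨by rintro (_ | _) h <;> exact h⟩

theorem HReachable.reachable_incidenceGraph (h : HReachable H p q) :
    (incidenceGraph H).Reachable (.inl p) (.inl q) := by
  induction h with
  | refl => rfl
  | tail _ hstep ih =>
    obtain ⟨e, hx, hy⟩ := hstep
    exact ih.trans ((SimpleGraph.Adj.reachable (v := (Sum.inr e : V ⊕ ι)) hx).trans
      (SimpleGraph.Adj.reachable (u := (Sum.inr e : V ⊕ ι)) hy))

variable [DecidableEq ι]

namespace HReachable

theorem of_update_empty (h : HReachable (update H i ∅) p q) : HReachable H p q :=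
  h.mono fun e => by
    rcases eq_or_ne e i with rfl | he
    · simp
    · simp [update_of_ne he]

theorem step_update_empty (he : e ≠ i) (hp : p ∈ H e) (hq : q ∈ H e) :
    HReachable (update H i ∅) p q :=
  step (e := e) (by rwa [update_of_ne he]) (by rwa [update_of_ne he])

theorem update_empty_of_ne (h : HReachable (update H i ∅) p q) (he : e ≠ i) (hq : q ∈ H e)
    (hv : v ∈ H e) : HReachable (update H i ∅) p v :=
  h.trans (step_update_empty he hq hv)

/-- Split a path at its last passage through the edge `i`. -/
theorem update_empty_or (h : HReachable H p q) :
    HReachable (update H i ∅) p q ∨ ∃ v ∈ H i, HReachable (update H i ∅) v q := by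
  induction h with
  | refl => exact .inl .refl
  | @tail x y _ hstep ih =>
    obtain ⟨e, hx, hy⟩ := hstep
    rcases eq_or_ne e i with rfl | he
    · exact .inr ⟨y, hy, .refl⟩
    · rcases ih with h | ⟨v, hv, h⟩
      · exact .inl (h.update_empty_of_ne he hx hy)
      · exact .inr ⟨v, hv, h.update_empty_of_ne he hx hy⟩

end HReachable

theorem incidenceGraph_update_empty_le :
    incidenceGraph (update H i ∅) ≤ (incidenceGraph H).deleteEdges {s(.inl v, .inr i)} := by
  have key : ∀ x f, x ∈ update H i ∅ f → f ≠ i ∧ x ∈ H f := fun x f hx => by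
    rcases eq_or_ne f i with rfl | hf
    · simp at hx
    · rw [update_of_ne hf] at hx; exact ⟨hf, hx⟩
  rintro (x | e) (y | f) hxy
  · exact hxy.elim
  · obtain ⟨hfi, hx⟩ := key x f hxy
    simp [incidenceGraph, hx, hfi]
  · obtain ⟨hei, hy⟩ := key y e hxy
    simp [incidenceGraph, hy, hei]
  · exact hxy.elim

/-- Otherwise the incidence graph would contain a cycle through `i`. -/
theorem eq_of_hReachable_update_empty (hH : (incidenceGraph H).IsAcyclic) (hv : v ∈ H i)
    (hw : w ∈ H i) (h : HReachable (update H i ∅) v w) : v = w := by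
  by_contra hvw
  have hbridge := SimpleGraph.isAcyclic_iff_forall_adj_isBridge.1 hH
    (show (incidenceGraph H).Adj (.inl v) (.inr i) from hv)
  refine SimpleGraph.isBridge_iff.1 hbridge (((h.reachable_incidenceGraph).mono
    incidenceGraph_update_empty_le).trans (SimpleGraph.Adj.reachable ?_))
  simp [incidenceGraph, hw, Ne.symm hvw]

theorem existsUnique_mem_hReachable_update_empty (hconn : SConnected H)
    (hH : (incidenceGraph H).IsAcyclic) (hi : (H i).Nonempty) (r : V) :
    ∃! v, v ∈ H i ∧ HReachable (update H i ∅) v r := by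
  obtain ⟨p, hp⟩ := hi
  obtain ⟨v, hv, hvr⟩ : ∃ v ∈ H i, HReachable (update H i ∅) v r := by
    rcases (hconn.hReachable p r).update_empty_or (i := i) with h | h
    exacts [⟨p, hp, h⟩, h]
  exact ⟨v, ⟨hv, hvr⟩, fun w ⟨hw, hwr⟩ =>
    eq_of_hReachable_update_empty hH hw hv (hwr.trans hvr.symm)⟩

/-- In the incidence tree this is the first edge on the path from `j` to `r`. -/
theorem existsUnique_separating_edge (hconn : SConnected H) (hH : (incidenceGraph H).IsAcyclic)
    {j r : V} (hjr : j ≠ r) :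
    ∃! i, j ∈ H i ∧ ¬ HReachable (update H i ∅) j r := by
  refine existsUnique_of_exists_of_unique ?_ ?_
  · by_contra! hsep
    suffices ∀ q, HReachable H r q → q ≠ j ∧ ∀ i, j ∈ H i → HReachable (update H i ∅) j q from
      (this j (hconn.hReachable r j)).1 rfl
    intro q hq
    induction hq with
    | refl => exact ⟨hjr.symm, hsep⟩
    | @tail x y _ hstep ih =>
      obtain ⟨e, hx, hy⟩ := hstep
      have hje : j ∉ H e := fun hje =>
        ih.1 (eq_of_hReachable_update_empty hH hje hx (ih.2 e hje)).symm
      exact ⟨fun hyj => hje (hyj ▸ hy), fun i hi =>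
        (ih.2 i hi).update_empty_of_ne (by rintro rfl; exact hje hi) hx hy⟩
  · rintro i₁ i₂ ⟨hj₁, hsep₁⟩ ⟨hj₂, hsep₂⟩
    by_contra hne
    obtain ⟨v, hv, hvr⟩ := ((hconn.hReachable j r).update_empty_or (i := i₁)).resolve_left hsep₁
    rcases hvr.update_empty_or (i := i₂) with h | ⟨w, hw, hwr⟩
    · rw [update_comm hne] at h
      exact hsep₂ ((HReachable.step_update_empty hne hj₁ hv).trans h.of_update_empty)
    · rw [update_of_ne (Ne.symm hne)] at hw
      exact hsep₁ ((HReachable.step_update_empty (Ne.symm hne) hj₂ hw).trans hwr.of_update_empty)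

section Tree

variable {V ι : Type*} {H : ι → Set V}

noncomputable def incidenceGraphEdgeSetEquiv (H : ι → Set V) :
    (Σ i, H i) ≃ (incidenceGraph H).edgeSet :=
  Equiv.ofBijective (fun x => ⟨s(.inl x.2.1, .inr x.1), x.2.2⟩) <| by
    constructor
    · rintro ⟨i, v, hv⟩ ⟨j, w, hw⟩ h
      obtain ⟨rfl, rfl⟩ : v = w ∧ i = j := by simpa using congrArg Subtype.val h
      rfl
    · rintro ⟨e, he⟩
      induction e using Sym2.ind with
      | h x y =>
        rcases x with v | i <;> rcases y with w | j
        · exact he.elim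
        · exact ⟨⟨j, v, he⟩, rfl⟩
        · exact ⟨⟨i, w, he⟩, Subtype.ext Sym2.eq_swap⟩
        · exact he.elim

theorem card_edgeSet_incidenceGraph [Finite V] [Fintype ι] :
    Nat.card (incidenceGraph H).edgeSet = ∑ i, (H i).ncard := by
  rw [← Nat.card_congr (incidenceGraphEdgeSetEquiv H), Nat.card_sigma]
  simp only [Nat.card_coe_set_eq]

theorem isTree_incidenceGraph [Finite V] [Fintype ι] {m : ι → ℕ} (hconn : SConnected H)
    (hcard : ∀ i, (H i).ncard = m i + 1) (hsum : ∑ i, m i + 1 = Nat.card V) :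
    (incidenceGraph H).IsTree := by
  have hne : ∀ i, (H i).Nonempty := fun i =>
    Set.nonempty_of_ncard_ne_zero (by rw [hcard i]; exact Nat.succ_ne_zero _)
  have hV : Nonempty V := Nat.card_pos_iff.1 (by omega) |>.1
  obtain ⟨v₀⟩ := hV
  have hroot : ∀ x, (incidenceGraph H).Reachable (.inl v₀) x := by
    rintro (v | i)
    · exact (hconn.hReachable v₀ v).reachable_incidenceGraph
    · obtain ⟨v, hv⟩ := hne i
      exact (hconn.hReachable v₀ v).reachable_incidenceGraph.trans
        (SimpleGraph.Adj.reachable (show (incidenceGraph H).Adj (.inl v) (.inr i) from hv))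
  have : Nonempty (V ⊕ ι) := ⟨.inl v₀⟩
  refine SimpleGraph.isTree_iff_connected_and_card.2
    ⟨⟨fun x y => (hroot x).symm.trans (hroot y)⟩, ?_⟩
  rw [card_edgeSet_incidenceGraph, Nat.card_sum, ← hsum]
  simp only [hcard, Finset.sum_add_distrib, Finset.sum_const, Finset.card_univ, smul_eq_mul,
    mul_one, Nat.card_eq_fintype_card]
  ring

end Tree

section Margins

variable {M N K : ℕ} {m : Fin M → ℕ}

def margins (m : Fin M → ℕ) : (Fin M → Fin N → ℝ) →ₗ[ℝ] (Fin M → ℝ) × (Fin N → ℝ) where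
  toFun Y := (fun i => ∑ j, Y i j, fun j => ∑ i, (m i : ℝ) * Y i j)
  map_add' Y Z := by ext <;> simp [Finset.sum_add_distrib, mul_add]
  map_smul' c Y := by ext <;> simp [Finset.mul_sum, mul_left_comm]

theorem sum_margins_snd (Y : Fin M → Fin N → ℝ) :
    ∑ j, (margins m Y).2 j = ∑ i, (m i : ℝ) * (margins m Y).1 i := by
  simp only [margins, LinearMap.coe_mk, AddHom.coe_mk, Finset.mul_sum]
  exact Finset.sum_comm

theorem mem_transPolytope_iff {Y : Fin M → Fin (K + 1) → ℝ} :
    Y ∈ transPolytope m ↔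
      (∀ i j, 0 ≤ Y i j) ∧ margins m Y = (fun _ => (K : ℝ) + 1, fun _ => (K : ℝ)) := by
  simp [transPolytope, margins, Prod.ext_iff, funext_iff]

def supportSubmodule (Y : Fin M → Fin N → ℝ) : Submodule ℝ (Fin M → Fin N → ℝ) where
  carrier := {Z | ∀ i j, Y i j = 0 → Z i j = 0}
  add_mem' hZ hZ' i j h := by simp [hZ i j h, hZ' i j h]
  zero_mem' _ _ _ := rfl
  smul_mem' c Z hZ i j h := by simp [hZ i j h]

open Filter Topology in
theorem exists_add_smul_mem_transPolytope {Y Z : Fin M → Fin (K + 1) → ℝ}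
    (hY : Y ∈ transPolytope m) (hZs : Z ∈ supportSubmodule Y) (hZm : margins m Z = 0) :
    ∃ t : ℝ, t ≠ 0 ∧ Y + t • Z ∈ transPolytope m ∧ Y - t • Z ∈ transPolytope m := by
  rw [mem_transPolytope_iff] at hY
  have hnonneg : ∀ᶠ t in 𝓝 (0 : ℝ), ∀ i j, 0 ≤ Y i j + t * Z i j := by
    simp only [eventually_all]
    intro i j
    rcases (hY.1 i j).eq_or_lt with h | h
    · exact .of_forall fun t => by simp [← h, hZs i j h.symm]
    · have hcont : Continuous fun t : ℝ => Y i j + t * Z i j := by fun_prop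
      exact ((hcont.tendsto 0).eventually (lt_mem_nhds (by simpa using h))).mono
        fun t ht => ht.le
  obtain ⟨ε, hε, hball⟩ := Metric.eventually_nhds_iff.1 hnonneg
  have hmem : ∀ t : ℝ, |t| < ε → Y + t • Z ∈ transPolytope m := fun t ht =>
    mem_transPolytope_iff.2 ⟨hball (by simpa using ht),
      by rw [map_add, map_smul, hZm, smul_zero, add_zero, hY.2]⟩
  refine ⟨ε / 2, by positivity, hmem _ ?_, ?_⟩
  · rw [abs_of_pos (by positivity)]; linarith
  · rw [sub_eq_add_neg, ← neg_smul]
    exact hmem _ (by rw [abs_neg, abs_of_pos (by positivity)]; linarith)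

theorem mem_extremePoints_transPolytope_iff {Y : Fin M → Fin (K + 1) → ℝ} :
    Y ∈ (transPolytope m).extremePoints ℝ ↔
      Y ∈ transPolytope m ∧ Disjoint (supportSubmodule Y) (LinearMap.ker (margins m)) := by
  refine ⟨fun hY => ⟨hY.1, Submodule.disjoint_def.2 fun Z hZs hZm => ?_⟩,
    fun ⟨hY, hdisj⟩ => ⟨hY, fun Y₁ hY₁ Y₂ hY₂ hseg => ?_⟩⟩
  · obtain ⟨t, ht, h₁, h₂⟩ := exists_add_smul_mem_transPolytope hY.1 hZs hZm
    have hseg : Y ∈ openSegment ℝ (Y + t • Z) (Y - t • Z) :=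
      ⟨1 / 2, 1 / 2, by norm_num, by norm_num, by norm_num, by module⟩
    have := hY.2 h₁ h₂ hseg
    simpa [ht] using this
  · obtain ⟨a, b, ha, hb, -, hY₁₂⟩ := hseg
    rw [mem_transPolytope_iff] at hY hY₁ hY₂
    have hsupp : Y₁ - Y ∈ supportSubmodule Y := fun i j h => by
      have hij : a * Y₁ i j + b * Y₂ i j = 0 := by
        simpa [h] using congrFun (congrFun hY₁₂ i) j
      have := hY₁.1 i j
      have := hY₂.1 i j
      simp only [Pi.sub_apply, h, sub_zero]
      nlinarith
    have hker : Y₁ - Y ∈ LinearMap.ker (margins m) := by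
      rw [LinearMap.mem_ker, map_sub, hY₁.2, hY.2, sub_self]
    exact sub_eq_zero.1 (Submodule.disjoint_def.1 hdisj _ hsupp hker)

end Margins

section Vertices

variable {M K : ℕ} {m : Fin M → ℕ} {Y : Fin M → Fin (K + 1) → ℝ}

theorem margins_range_ne_top : LinearMap.range (margins (N := K + 1) m) ≠ ⊤ := by
  intro h
  obtain ⟨Z, hZ⟩ : ((0 : Fin M → ℝ), (Pi.single 0 1 : Fin (K + 1) → ℝ)) ∈
      LinearMap.range (margins m) := h ▸ Submodule.mem_top
  have := sum_margins_snd (m := m) Z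
  simp [hZ] at this

/-- The support of a vertex indexes linearly independent vectors `margins (E i j)` in the range
of `margins`, which is a proper subspace of a space of dimension `M + K + 1`. -/
theorem sum_ncard_suppHyp_le (hY : Y ∈ (transPolytope m).extremePoints ℝ) :
    ∑ i, (suppHyp Y i).ncard ≤ M + K := by
  classical
  have hdisj := (mem_extremePoints_transPolytope_iff.1 hY).2
  let b := Pi.basis fun _ : Fin M => Pi.basisFun ℝ (Fin (K + 1))
  let E : (Σ i, suppHyp Y i) → Fin M → Fin (K + 1) → ℝ := b ∘ Sigma.map id fun _ => Subtype.val
  have hE : LinearIndependent ℝ E := b.linearIndependent.comp _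
    (injective_id.sigma_map fun _ => Subtype.val_injective)
  have hspan : Submodule.span ℝ (Set.range E) ≤ supportSubmodule Y := by
    refine Submodule.span_le.2 ?_
    rintro _ ⟨⟨i, j, hj⟩, rfl⟩ i' j' h
    have hE : E ⟨i, j, hj⟩ = Pi.single i (Pi.single j 1) := by
      simp [E, b, Pi.basis_apply, Sigma.map]
    rw [hE]
    rcases eq_or_ne i' i with rfl | hi
    · rcases eq_or_ne j' j with rfl | hj'
      · exact absurd h hj.ne'
      · simp [hj']
    · simp [hi]
  have hli := hE.map (hdisj.mono_left hspan)
  suffices ∑ i, (suppHyp Y i).ncard < M + (K + 1) by omega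
  calc ∑ i, (suppHyp Y i).ncard = Fintype.card (Σ i, suppHyp Y i) := by
        simp [Fintype.card_sigma, Set.ncard_eq_toFinset_card']
    _ = Module.finrank ℝ (Submodule.span ℝ (Set.range (margins m ∘ E))) :=
        (finrank_span_eq_card hli).symm
    _ ≤ Module.finrank ℝ (LinearMap.range (margins m)) := by
        apply Submodule.finrank_mono
        rw [Submodule.span_le]
        rintro _ ⟨x, rfl⟩
        exact LinearMap.mem_range_self _ _
    _ < Module.finrank ℝ ((Fin M → ℝ) × (Fin (K + 1) → ℝ)) :=
        Submodule.finrank_lt margins_range_ne_top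
    _ = M + (K + 1) := by simp

theorem ncard_suppHyp {N : ℕ} (Y : Fin M → Fin N → ℝ) (i : Fin M) :
    (suppHyp Y i).ncard = #{j | 0 < Y i j} := by
  classical
  rw [Set.ncard_eq_toFinset_card', suppHyp, Set.toFinset_ofPred]

/-- A column carries weight at most `K`, so a row of total `K + 1` needs more than `m i` entries. -/
theorem add_one_le_ncard_suppHyp (hm : ∀ i, 1 ≤ m i) (hY : Y ∈ transPolytope m) (i : Fin M) :
    m i + 1 ≤ (suppHyp Y i).ncard := by
  obtain ⟨hnn, hrow, hcol⟩ := hY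
  have hentry : ∀ j, (m i : ℝ) * Y i j ≤ if 0 < Y i j then (K : ℝ) else 0 := fun j => by
    split_ifs with h
    · rw [← hcol j]
      exact Finset.single_le_sum (f := fun e => (m e : ℝ) * Y e j)
        (fun e _ => mul_nonneg (Nat.cast_nonneg _) (hnn e j)) (Finset.mem_univ i)
    · simp [le_antisymm (not_lt.1 h) (hnn i j)]
  have hsum := Finset.sum_le_sum fun j (_ : j ∈ Finset.univ) => hentry j
  rw [← Finset.mul_sum, hrow, Finset.sum_ite, Finset.sum_const, Finset.sum_const_zero,
    nsmul_eq_mul, add_zero] at hsum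
  rw [ncard_suppHyp]
  by_contra! hlt
  have hcard : ((#{j | 0 < Y i j} : ℕ) : ℝ) ≤ m i := by exact_mod_cast Nat.lt_succ_iff.1 hlt
  have hm1 : (1 : ℝ) ≤ m i := by exact_mod_cast hm i
  nlinarith [mul_le_mul_of_nonneg_right hcard (Nat.cast_nonneg (α := ℝ) K)]

theorem ncard_suppHyp_of_mem_extremePoints (hm : ∀ i, 1 ≤ m i) (hw : ∑ i, m i = K)
    (hY : Y ∈ (transPolytope m).extremePoints ℝ) (i : Fin M) :
    (suppHyp Y i).ncard = m i + 1 := by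
  have hle : ∀ i ∈ Finset.univ, m i + 1 ≤ (suppHyp Y i).ncard :=
    fun i _ => add_one_le_ncard_suppHyp hm hY.1 i
  have heq : ∑ i, (m i + 1) = ∑ i, (suppHyp Y i).ncard := by
    have := sum_ncard_suppHyp_le hY
    have := Finset.sum_le_sum hle
    simp only [Finset.sum_add_distrib, hw, Finset.sum_const, Finset.card_univ, Fintype.card_fin,
      smul_eq_mul, mul_one] at *
    omega
  exact ((Finset.sum_eq_sum_iff_of_le hle).1 heq i (Finset.mem_univ i)).symm

theorem eq_of_suppHyp_subset {Y' : Fin M → Fin (K + 1) → ℝ}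
    (hY : Y ∈ (transPolytope m).extremePoints ℝ) (hY' : Y' ∈ transPolytope m)
    (h : ∀ i, suppHyp Y' i ⊆ suppHyp Y i) : Y' = Y := by
  obtain ⟨hY, hdisj⟩ := mem_extremePoints_transPolytope_iff.1 hY
  rw [mem_transPolytope_iff] at hY hY'
  refine sub_eq_zero.1 (Submodule.disjoint_def.1 hdisj _ (fun i j hij => ?_) ?_)
  · have : ¬ 0 < Y' i j := fun hpos => (h i hpos).ne' hij
    simp [hij, le_antisymm (not_lt.1 this) (hY'.1 i j)]
  · rw [LinearMap.mem_ker, map_sub, hY.2, hY'.2, sub_self]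

/-- Double-count the weight on a union `A` of components: `K * #A = (K + 1) * w` for an integer
`w`, and `K` is coprime to `K + 1`. -/
theorem eq_univ_of_closed (hY : Y ∈ transPolytope m) {A : Finset (Fin (K + 1))}
    (hA : A.Nonempty) (hclosed : ∀ i j j', j ∈ A → 0 < Y i j → 0 < Y i j' → j' ∈ A) :
    A = Finset.univ := by
  obtain ⟨hnn, hrow, hcol⟩ := hY
  have hrowA : ∀ i, ∑ j ∈ A, Y i j = if ∃ j ∈ A, 0 < Y i j then (K : ℝ) + 1 else 0 := by
    intro i
    split_ifs with h
    · obtain ⟨j, hj, hpos⟩ := h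
      rw [← hrow i]
      exact Finset.sum_subset (Finset.subset_univ A) fun j' _ hj' =>
        le_antisymm (not_lt.1 fun hpos' => hj' (hclosed i j j' hj hpos hpos')) (hnn i j')
    · push Not at h
      exact Finset.sum_eq_zero fun j hj => le_antisymm (h j hj) (hnn i j)
  have key : (K : ℝ) * #A = (K + 1) * ∑ i with ∃ j ∈ A, 0 < Y i j, (m i : ℝ) := by
    calc (K : ℝ) * #A = ∑ j ∈ A, ∑ i, (m i : ℝ) * Y i j := by
          rw [Finset.sum_congr rfl fun j _ => hcol j, Finset.sum_const, nsmul_eq_mul, mul_comm]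
      _ = ∑ i, (m i : ℝ) * ∑ j ∈ A, Y i j := by rw [Finset.sum_comm]; simp [Finset.mul_sum]
      _ = _ := by simp_rw [hrowA, mul_ite, mul_zero, Finset.sum_ite, Finset.sum_const_zero,
          add_zero, Finset.mul_sum, mul_comm]
  have hdvd : K + 1 ∣ K * #A :=
    ⟨_, by exact_mod_cast key⟩
  have hdvd' : K + 1 ∣ #A :=
    (Nat.coprime_self_add_left.2 (Nat.coprime_one_left K)).dvd_of_dvd_mul_left hdvd
  apply Finset.eq_univ_of_card
  have := Finset.card_le_univ A
  have := Nat.le_of_dvd hA.card_pos hdvd'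
  simp only [Fintype.card_fin] at *
  omega

theorem sConnected_suppHyp (hY : Y ∈ transPolytope m) : SConnected (suppHyp Y) := by
  classical
  intro u v
  change HReachable (suppHyp Y) u v
  have hA := eq_univ_of_closed hY (A := Finset.univ.filter (HReachable (suppHyp Y) u))
    ⟨u, (Finset.mem_filter_univ _).2 HReachable.refl⟩ fun i j j' hj hpos hpos' => by
      rw [Finset.mem_filter_univ] at hj ⊢
      exact hj.trans (.step (e := i) hpos hpos')
  exact (Finset.mem_filter_univ v).1 (by rw [hA]; exact Finset.mem_univ v)

end Vertices

section Embedding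

variable {M K : ℕ} {m : Fin M → ℕ} {A : Fin M → Fin K → ℝ} {r : Fin (K + 1)}

theorem insertZeroCol_nonneg (hA : A ∈ stochPolytope m) (i : Fin M) (j : Fin (K + 1)) :
    0 ≤ insertZeroCol r A i j := by
  obtain rfl | ⟨k, rfl⟩ := Fin.eq_self_or_eq_succAbove r j
  · simp [insertZeroCol]
  · simpa [insertZeroCol] using hA.1 i k

theorem sum_insertZeroCol_row_s18 (hA : A ∈ stochPolytope m) (i : Fin M) :
    ∑ j, insertZeroCol r A i j = 1 := by
  simpa [insertZeroCol, Fin.sum_univ_succAbove _ r] using hA.2.1 i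

theorem sum_insertZeroCol_col (hA : A ∈ stochPolytope m) (j : Fin (K + 1)) :
    ∑ i, (m i : ℝ) * insertZeroCol r A i j = if j = r then 0 else 1 := by
  obtain rfl | ⟨k, rfl⟩ := Fin.eq_self_or_eq_succAbove r j
  · simp [insertZeroCol]
  · simpa [insertZeroCol, Fin.succAbove_ne] using hA.2.2 k

theorem mem_transPolytope_of_mem_sum {Y : Fin M → Fin (K + 1) → ℝ}
    (hY : Y ∈ ∑ j, insertZeroCol j '' stochPolytope m) : Y ∈ transPolytope m := by
  obtain ⟨g, hg, rfl⟩ := (Set.mem_finsetSum _ _ _).1 hY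
  choose A hA hgA using fun r => hg (Finset.mem_univ r)
  simp only [← hgA]
  refine ⟨fun i j => ?_, fun i => ?_, fun j => ?_⟩ <;> simp only [Finset.sum_apply]
  · exact Finset.sum_nonneg fun r _ => insertZeroCol_nonneg (hA r) i j
  · rw [Finset.sum_comm]
    simp [sum_insertZeroCol_row_s18 (hA _)]
  · simp_rw [Finset.mul_sum]
    rw [Finset.sum_comm]
    simp [sum_insertZeroCol_col (hA _), Finset.sum_ite, Finset.filter_ne]

end Embedding

section Construction

open scoped Classical

variable {M K : ℕ} {m : Fin M → ℕ} {H : Fin M → Set (Fin (K + 1))}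

theorem eq_zero_of_support_subset_of_isAcyclic {N : ℕ} {H : Fin M → Set (Fin N)}
    (hH : (incidenceGraph H).IsAcyclic) (hm : ∀ i, 1 ≤ m i) {Z : Fin M → Fin N → ℝ}
    (hZ : ∀ i j, j ∉ H i → Z i j = 0) (hZm : margins m Z = 0) : Z = 0 := by
  have hrow : ∀ i, ∑ j, Z i j = 0 := fun i => congrFun (congrArg Prod.fst hZm) i
  have hcol : ∀ j, ∑ i, (m i : ℝ) * Z i j = 0 := fun j => congrFun (congrArg Prod.snd hZm) j
  funext i j
  by_cases hj : j ∉ H i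
  · exact hZ i j hj
  rw [not_not] at hj
  -- the columns reachable from `j` without edge `i` meet row `i` only in `j`
  let C : Finset (Fin N) := {q | HReachable (update H i ∅) j q}
  have hC : ∀ e ≠ i, ∑ q ∈ C, Z e q = 0 := by
    intro e he
    by_cases hmeet : ∃ x ∈ H e, x ∈ C
    · obtain ⟨x, hx, hxC⟩ := hmeet
      rw [← hrow e]
      refine Finset.sum_subset (Finset.subset_univ C) fun q _ hq => hZ e q fun hqe => hq ?_
      rw [Finset.mem_filter_univ] at hxC ⊢
      exact hxC.update_empty_of_ne he hx hqe
    · push Not at hmeet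
      exact Finset.sum_eq_zero fun q hq => hZ e q fun hqe => hmeet q hqe hq
  have hCi : ∑ q ∈ C, Z i q = Z i j := by
    refine Finset.sum_eq_single_of_mem j ((Finset.mem_filter_univ _).2 .refl) fun q hq hqj => ?_
    exact hZ i q fun hqi =>
      hqj (eq_of_hReachable_update_empty hH hj hqi ((Finset.mem_filter_univ _).1 hq)).symm
  have : (m i : ℝ) * Z i j = 0 := by
    calc (m i : ℝ) * Z i j = ∑ e, (m e : ℝ) * ∑ q ∈ C, Z e q := by
          rw [Finset.sum_eq_single i (fun e _ he => by rw [hC e he, mul_zero]) (by simp), hCi]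
      _ = ∑ q ∈ C, ∑ e, (m e : ℝ) * Z e q := by simp_rw [Finset.mul_sum]; exact Finset.sum_comm
      _ = 0 := Finset.sum_eq_zero fun q _ => hcol q
  simpa [Nat.one_le_iff_ne_zero.1 (hm i)] using this

/-- In a hypertree all vertices of `H i` but one are cut off from `r` by deleting edge `i`, so
every row sums to `1`. -/
noncomputable def separationMatrix (H : Fin M → Set (Fin (K + 1))) (m : Fin M → ℕ)
    (r : Fin (K + 1)) : Fin M → Fin (K + 1) → ℝ :=
  fun i j => if j ∈ H i ∧ ¬ HReachable (update H i ∅) j r then (m i : ℝ)⁻¹ else 0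

noncomputable def hypertreeVertex (H : Fin M → Set (Fin (K + 1))) (m : Fin M → ℕ) :
    Fin M → Fin (K + 1) → ℝ :=
  ∑ r, separationMatrix H m r

theorem separationMatrix_nonneg (i : Fin M) (j r : Fin (K + 1)) :
    0 ≤ separationMatrix H m r i j := by
  unfold separationMatrix
  split_ifs <;> positivity

theorem card_separated (hconn : SConnected H) (hH : (incidenceGraph H).IsAcyclic)
    (hcard : ∀ i, (H i).ncard = m i + 1) (i : Fin M) (r : Fin (K + 1)) :
    #{j | j ∈ H i ∧ ¬ HReachable (update H i ∅) j r} = m i := by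
  have hne : (H i).Nonempty :=
    Set.nonempty_of_ncard_ne_zero (by rw [hcard i]; exact Nat.succ_ne_zero _)
  have hone : #{j | j ∈ H i ∧ HReachable (update H i ∅) j r} = 1 :=
    (Fintype.existsUnique_iff_card_one _).1
      (existsUnique_mem_hReachable_update_empty hconn hH hne r)
  have htot : #{j | j ∈ H i} = m i + 1 := by
    rw [← hcard i, Set.ncard_eq_toFinset_card']
    congr 1
    ext
    simp
  have := Finset.card_filter_add_card_filter_not
    (s := {j | j ∈ H i}) (p := fun j => HReachable (update H i ∅) j r)
  simp only [Finset.filter_filter] at this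
  omega

theorem separationMatrix_mem_image (hconn : SConnected H) (hH : (incidenceGraph H).IsAcyclic)
    (hcard : ∀ i, (H i).ncard = m i + 1) (hm : ∀ i, 1 ≤ m i) (r : Fin (K + 1)) :
    separationMatrix H m r ∈ insertZeroCol r '' stochPolytope m := by
  have hr : ∀ i, separationMatrix H m r i r = 0 := fun i => by
    simp [separationMatrix, HReachable.refl]
  refine ⟨fun i => Fin.removeNth r (separationMatrix H m r i),
    ⟨fun i k => separationMatrix_nonneg i _ r, fun i => ?_, fun k => ?_⟩, ?_⟩
  · have hmi : (m i : ℝ) ≠ 0 := by have := hm i; positivity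
    have := Fin.sum_univ_succAbove (separationMatrix H m r i) r
    rw [hr, zero_add] at this
    change ∑ k, separationMatrix H m r i (r.succAbove k) = 1
    rw [← this]
    simp only [separationMatrix]
    rw [Finset.sum_ite, Finset.sum_const, Finset.sum_const_zero, add_zero, nsmul_eq_mul,
      card_separated hconn hH hcard, mul_inv_cancel₀ hmi]
  · have hj : r.succAbove k ≠ r := Fin.succAbove_ne r k
    have : ∀ i, (m i : ℝ) * separationMatrix H m r i (r.succAbove k) =
        if r.succAbove k ∈ H i ∧ ¬ HReachable (update H i ∅) (r.succAbove k) r then 1 else 0 :=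
      fun i => by
        have hmi : (m i : ℝ) ≠ 0 := by have := hm i; positivity
        simp only [separationMatrix]
        split_ifs <;> simp [hmi]
    simp only [Fin.removeNth, this, Finset.sum_boole]
    exact_mod_cast (Fintype.existsUnique_iff_card_one _).1
      (existsUnique_separating_edge hconn hH hj)
  · funext i
    simp [insertZeroCol, Fin.insertNth_removeNth, hr]

theorem hypertreeVertex_mem_sum (hconn : SConnected H) (hH : (incidenceGraph H).IsAcyclic)
    (hcard : ∀ i, (H i).ncard = m i + 1) (hm : ∀ i, 1 ≤ m i) :
    hypertreeVertex H m ∈ ∑ j, insertZeroCol j '' stochPolytope m :=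
  Set.finsetSum_mem_finsetSum _ _ _ fun r _ =>
    separationMatrix_mem_image hconn hH hcard hm r

theorem suppHyp_hypertreeVertex (hH : (incidenceGraph H).IsAcyclic)
    (hcard : ∀ i, (H i).ncard = m i + 1) (hm : ∀ i, 1 ≤ m i) :
    suppHyp (hypertreeVertex H m) = H := by
  funext i
  ext j
  simp only [suppHyp, hypertreeVertex, Finset.sum_apply, Set.mem_ofPred_eq]
  constructor
  · intro hpos
    by_contra hj
    simp [separationMatrix, hj] at hpos
  · intro hj
    obtain ⟨w, hw, hwj⟩ := Set.exists_ne_of_one_lt_ncard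
      (by rw [hcard i]; have := hm i; omega) j
    refine Finset.sum_pos' (fun r _ => separationMatrix_nonneg i j r) ⟨w, Finset.mem_univ w, ?_⟩
    rw [separationMatrix, if_pos ⟨hj, fun h => hwj (eq_of_hReachable_update_empty hH hj hw h).symm⟩]
    have := hm i
    positivity

theorem hypertreeVertex_mem_extremePoints (hconn : SConnected H)
    (hH : (incidenceGraph H).IsAcyclic) (hcard : ∀ i, (H i).ncard = m i + 1) (hm : ∀ i, 1 ≤ m i) :
    hypertreeVertex H m ∈ (transPolytope m).extremePoints ℝ := by
  have hT := mem_transPolytope_of_mem_sum (hypertreeVertex_mem_sum hconn hH hcard hm)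
  refine mem_extremePoints_transPolytope_iff.2 ⟨hT, Submodule.disjoint_def.2 fun Z hZs hZm =>
    eq_zero_of_support_subset_of_isAcyclic hH hm (fun i j hj => hZs i j ?_) hZm⟩
  have : j ∉ suppHyp (hypertreeVertex H m) i := by
    rwa [suppHyp_hypertreeVertex hH hcard hm]
  exact le_antisymm (not_lt.1 this) (hT.1 i j)

end Construction

/-- Taking the support hypergraph is a bijection between the vertices (extreme points) of
the weighted transportation polytope and the connected linkage hypergraphs (edge `i` has
exactly `m i + 1` vertices); moreover every vertex of `T` lies in the Minkowski sum
`Σ_j φ_j(D)`. -/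
theorem vertices_transPolytope {M K : ℕ} (m : Fin M → ℕ)
    (hm : ∀ i, 1 ≤ m i) (hw : ∑ i, m i = K) :
    (∀ Y ∈ Set.extremePoints ℝ (transPolytope (M := M) (K := K) m),
        (∀ i, (suppHyp Y i).ncard = m i + 1) ∧ SConnected (suppHyp Y)) ∧
    (∀ Y ∈ Set.extremePoints ℝ (transPolytope (M := M) (K := K) m),
      ∀ Y' ∈ Set.extremePoints ℝ (transPolytope (M := M) (K := K) m),
        suppHyp Y = suppHyp Y' → Y = Y') ∧
    (∀ H : Fin M → Set (Fin (K + 1)), (∀ i, (H i).ncard = m i + 1) → SConnected H →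
        ∃ Y ∈ Set.extremePoints ℝ (transPolytope (M := M) (K := K) m), suppHyp Y = H) ∧
    (∀ Y ∈ Set.extremePoints ℝ (transPolytope (M := M) (K := K) m),
        Y ∈ ∑ j : Fin (K + 1), (insertZeroCol j '' stochPolytope m)) := by
  have hacyclic (H : Fin M → Set (Fin (K + 1))) (hconn : SConnected H)
      (hcard : ∀ i, (H i).ncard = m i + 1) : (incidenceGraph H).IsAcyclic :=
    (isTree_incidenceGraph hconn hcard (by simp [hw])).isAcyclic
  refine ⟨fun Y hY => ⟨ncard_suppHyp_of_mem_extremePoints hm hw hY, sConnected_suppHyp hY.1⟩,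
    fun Y hY Y' hY' h => eq_of_suppHyp_subset hY' hY.1 fun i => (congrFun h i).subset,
    fun H hcard hconn => ⟨hypertreeVertex H m, hypertreeVertex_mem_extremePoints hconn
      (hacyclic H hconn hcard) hcard hm, suppHyp_hypertreeVertex (hacyclic H hconn hcard) hcard hm⟩,
    fun Y hY => ?_⟩
  have hconn := sConnected_suppHyp hY.1
  have hcard := ncard_suppHyp_of_mem_extremePoints hm hw hY
  have hH := hacyclic _ hconn hcard
  have hmem := hypertreeVertex_mem_sum hconn hH hcard hm
  rwa [← eq_of_suppHyp_subset hY (mem_transPolytope_of_mem_sum hmem)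
    (by rw [suppHyp_hypertreeVertex hH hcard hm]; exact fun i => subset_rfl)]
end Hypergraph
end
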